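/- Equivalent necessary conditions: If there exists an obedient ambiguous experiment (σ, μ) with U_s(σ, μ, τ*) > u_s^BP, then φ_r is not affine and there exist Pareto-ranked experiments σ and σ* such that: (i) for every state ω, the supports of σ(·|ω) and σ*(·|ω) coincide; (ii) u_s(σ, τ*) > u_s^BP; and (iii) σ* is obedient while σ is not obedient. -/

import Mathlib

open Finset

/-- A stochastic kernel from `X` to `Y`: each row `k x` is a probability vector on `Y`.
An experiment is a kernel from states `Ω` to messages; a receiver strategy is a kernel
from messages to actions `A`. -/
def IsKernel {X Y : Type*} [Fintype Y] (k : X → Y → ℝ) : Prop :=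
  (∀ x y, 0 ≤ k x y) ∧ ∀ x, ∑ y, k x y = 1

/-- A probability vector on a finite type. -/
def IsProb {Θ : Type*} [Fintype Θ] (μ : Θ → ℝ) : Prop :=
  (∀ θ, 0 ≤ μ θ) ∧ ∑ θ, μ θ = 1

/-- The obedient strategy `τ*`: take the recommended action with probability one. -/
noncomputable def tauStar {A : Type*} [DecidableEq A] : A → A → ℝ :=
  fun m a => if a = m then (1 : ℝ) else 0

/-- Expected payoff `u_i(σ, τ) = ∑_{ω,m,a} p(ω) σ(m|ω) τ(a|m) u_i(a,ω)`. -/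
noncomputable def expPayoff {Ω M A : Type*} [Fintype Ω] [Fintype M] [Fintype A]
    (p : Ω → ℝ) (u : A → Ω → ℝ) (σ : Ω → M → ℝ) (τ : M → A → ℝ) : ℝ :=
  ∑ ω, ∑ m, ∑ a, p ω * σ ω m * τ m a * u a ω

/-- Obedience of a single (unambiguous) canonical experiment: `τ*` is a best reply. -/
def Obedient {Ω A : Type*} [Fintype Ω] [Fintype A] [DecidableEq A]
    (p : Ω → ℝ) (ur : A → Ω → ℝ) (σ : Ω → A → ℝ) : Prop :=
  ∀ τ : A → A → ℝ, IsKernel τ → expPayoff p ur σ τ ≤ expPayoff p ur σ tauStar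

/-- Obedience of an ambiguous experiment `(σ, μ)` for a smooth-ambiguity receiver with
index `φr`:  `τ*` maximizes `τ ↦ U_r(σ, μ, τ) = φr⁻¹(∑_θ μ_θ φr(u_r(σ_θ, τ)))`; since `φr`
is strictly increasing this is equivalent to `τ*` maximizing `τ ↦ ∑_θ μ_θ φr(u_r(σ_θ, τ))`. -/
def AmbObedient {Ω A Θ : Type*} [Fintype Ω] [Fintype A] [DecidableEq A] [Fintype Θ]
    (φr : ℝ → ℝ) (p : Ω → ℝ) (ur : A → Ω → ℝ) (σ : Θ → Ω → A → ℝ) (μ : Θ → ℝ) : Prop :=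
  ∀ τ : A → A → ℝ, IsKernel τ →
    ∑ θ, μ θ * φr (expPayoff p ur (σ θ) τ) ≤ ∑ θ, μ θ * φr (expPayoff p ur (σ θ) tauStar)

/-- A smooth ambiguity index: strictly increasing, concave, differentiable. -/
def SmoothIndex (φ : ℝ → ℝ) : Prop :=
  StrictMono φ ∧ ConcaveOn ℝ Set.univ φ ∧ Differentiable ℝ φ

/-- Two experiments are (strictly) Pareto ranked: under obedience, sender and receiver
strictly rank them the same way. -/
def ParetoRanked {Ω A : Type*} [Fintype Ω] [Fintype A] [DecidableEq A]
    (p : Ω → ℝ) (us ur : A → Ω → ℝ) (σ σ' : Ω → A → ℝ) : Prop :=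
  (expPayoff p us σ' tauStar < expPayoff p us σ tauStar ∧
      expPayoff p ur σ' tauStar < expPayoff p ur σ tauStar) ∨
  (expPayoff p us σ tauStar < expPayoff p us σ' tauStar ∧
      expPayoff p ur σ tauStar < expPayoff p ur σ' tauStar)

/-- Two experiments are weakly Pareto ranked. -/
def WeaklyParetoRanked {Ω A : Type*} [Fintype Ω] [Fintype A] [DecidableEq A]
    (p : Ω → ℝ) (us ur : A → Ω → ℝ) (σ σ' : Ω → A → ℝ) : Prop :=
  (expPayoff p us σ' tauStar ≤ expPayoff p us σ tauStar ∧
      expPayoff p ur σ' tauStar ≤ expPayoff p ur σ tauStar) ∨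
  (expPayoff p us σ tauStar ≤ expPayoff p us σ' tauStar ∧
      expPayoff p ur σ tauStar ≤ expPayoff p ur σ' tauStar)

/-- Pointwise convex combination of two experiments. -/
noncomputable def mixExp {Ω A : Type*} (lam : ℝ) (σ1 σ2 : Ω → A → ℝ) : Ω → A → ℝ :=
  fun ω a => lam * σ1 ω a + (1 - lam) * σ2 ω a

/-- `(σbar, σlo, lam)` is a Pareto-ranked splitting of the experiment `σ`. -/
def ParetoRankedSplitting {Ω A : Type*} [Fintype Ω] [Fintype A] [DecidableEq A]
    (p : Ω → ℝ) (us ur : A → Ω → ℝ) (σbar σlo : Ω → A → ℝ) (lam : ℝ) (σ : Ω → A → ℝ) : Prop :=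
  IsKernel σbar ∧ IsKernel σlo ∧ lam ∈ Set.Ioo (0 : ℝ) 1 ∧
    mixExp lam σbar σlo = σ ∧ ParetoRanked p us ur σbar σlo

/-- The `((σbar, σlo), lam)`-probability premium of a player with utility `u` and index `φ`. -/
noncomputable def probPremium {Ω A : Type*} [Fintype Ω] [Fintype A] [DecidableEq A]
    (p : Ω → ℝ) (u : A → Ω → ℝ) (φ : ℝ → ℝ) (σbar σlo : Ω → A → ℝ) (lam : ℝ) : ℝ :=
  (φ (expPayoff p u (mixExp lam σbar σlo) tauStar) -
      lam * φ (expPayoff p u σbar tauStar) - (1 - lam) * φ (expPayoff p u σlo tauStar)) /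
    (φ (expPayoff p u σbar tauStar) - φ (expPayoff p u σlo tauStar))

/-- The set of `φs`-transformed sender values attainable by obedient ambiguous experiments;
the value of the sender's problem `(P)` equals `u` iff `φs u` is the least upper bound of
this set (since `φs` is continuous and strictly increasing). -/
def senderValues {Ω A : Type*} [Fintype Ω] [Fintype A] [DecidableEq A]
    (φs φr : ℝ → ℝ) (p : Ω → ℝ) (us ur : A → Ω → ℝ) : Set ℝ :=
  {x | ∃ (n : ℕ) (σ : Fin n → Ω → A → ℝ) (μ : Fin n → ℝ),
    (∀ j, IsKernel (σ j)) ∧ IsProb μ ∧ AmbObedient φr p ur σ μ ∧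
    x = ∑ j, μ j * φs (expPayoff p us (σ j) tauStar)}

/-- The set of feasible values of the auxiliary program `(Φ*(u))`: sums
`∑_θ λ_θ Φ_u(σ_θ)` over splittings `(λ_θ, σ_θ)` of obedient experiments, where
`Φ_u(σ) = (φs(u_s(σ,τ*)) − φs(u)) / φr'(u_r(σ,τ*))`. -/
def phiProgram {Ω A : Type*} [Fintype Ω] [Fintype A] [DecidableEq A]
    (φs φr : ℝ → ℝ) (p : Ω → ℝ) (us ur : A → Ω → ℝ) (u : ℝ) : Set ℝ :=
  {x | ∃ (n : ℕ) (σ : Fin n → Ω → A → ℝ) (lam : Fin n → ℝ),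
    (∀ j, IsKernel (σ j)) ∧ IsProb lam ∧
    Obedient p ur (fun ω a => ∑ j, lam j * σ j ω a) ∧
    x = ∑ j, lam j * ((φs (expPayoff p us (σ j) tauStar) - φs u) /
      deriv φr (expPayoff p ur (σ j) tauStar))}

/-!
Averaging the ambiguous experiment gives `σ̄ = ∑ θ, μ θ • σ θ`. By Jensen's inequality for the
concave `φs` the sender strictly prefers `σ̄` to every obedient experiment, so `σ̄` is not obedient,
whereas an affine `φr` would make ambiguous obedience of `(σ, μ)` the same as obedience of `σ̄`.

What ambiguous obedience does give is a first-order condition in the direction of every receiver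
strategy: the average of the `σ θ` reweighted by the receiver's marginal utilities
`μ θ * φr' (u_r(σ θ, τ*))` is obedient, and it has the support of `σ̄`. Mixing it with the garbling
of `σ̄` by a best reply and with the uninformative experiment `σ₀` recommending the ex-ante optimal
action gives an obedient `K` whose support contains those of `σ̄` and `σ₀`, and which the receiver
strictly prefers to `σ₀`. For small `δ > 0` the experiments `δ K + (1 - δ) σ̄` (still not obedient,
still above `u_s^BP`) and `(δ / 2) K + (1 - δ / 2) σ₀` (obedient) both have the support of `K` and
are Pareto ranked.
-/

open Filter Topology

noncomputable def detKernel {X Y : Type*} [DecidableEq Y] (f : X → Y) : X → Y → ℝ :=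
  fun x y => if y = f x then 1 else 0

def IsBestReply {Ω A : Type*} [Fintype Ω] [Fintype A] (p : Ω → ℝ) (ur : A → Ω → ℝ)
    (σ : Ω → A → ℝ) (τ : A → A → ℝ) : Prop :=
  ∀ τ' : A → A → ℝ, IsKernel τ' → expPayoff p ur σ τ' ≤ expPayoff p ur σ τ

section Kernel

variable {X Y : Type*} [Fintype Y]

theorem isKernel_detKernel [DecidableEq Y] (f : X → Y) : IsKernel (detKernel f) :=
  ⟨fun x y => by unfold detKernel; split_ifs <;> norm_num, fun x => by simp [detKernel]⟩

theorem isKernel_tauStar {A : Type*} [Fintype A] [DecidableEq A] : IsKernel (tauStar (A := A)) :=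
  isKernel_detKernel id

theorem IsKernel.mix {k k' : X → Y → ℝ} {t : ℝ} (hk : IsKernel k) (hk' : IsKernel k')
    (ht : t ∈ Set.Icc 0 1) : IsKernel (mixExp t k k') := by
  refine ⟨fun x y => ?_, fun x => ?_⟩
  · exact add_nonneg (mul_nonneg ht.1 (hk.1 x y)) (mul_nonneg (sub_nonneg.2 ht.2) (hk'.1 x y))
  · simp only [mixExp, sum_add_distrib, ← mul_sum, hk.2 x, hk'.2 x]; ring

theorem IsKernel.mix_pos_iff {k k' : X → Y → ℝ} {t : ℝ} (hk : IsKernel k) (hk' : IsKernel k')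
    (ht : t ∈ Set.Ioo 0 1) (x : X) (y : Y) :
    0 < mixExp t k k' x y ↔ 0 < k x y ∨ 0 < k' x y := by
  have := hk.1 x y; have := hk'.1 x y
  have := ht.1; have := ht.2
  unfold mixExp
  constructor
  · intro h; by_contra! hc; nlinarith
  · rintro (h | h) <;> nlinarith

theorem IsKernel.sum_mul {ι : Type*} [Fintype ι] {w : ι → ℝ} {k : ι → X → Y → ℝ}
    (hw : IsProb w) (hk : ∀ i, IsKernel (k i)) : IsKernel fun x y => ∑ i, w i * k i x y := by
  refine ⟨fun x y => sum_nonneg fun i _ => mul_nonneg (hw.1 i) ((hk i).1 x y), fun x => ?_⟩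
  rw [sum_comm]; simp only [← mul_sum, (hk _).2 x, mul_one, hw.2]

theorem IsKernel.comp {Z : Type*} [Fintype Z] {k : X → Y → ℝ} {κ : Y → Z → ℝ}
    (hk : IsKernel k) (hκ : IsKernel κ) : IsKernel fun x z => ∑ y, k x y * κ y z := by
  refine ⟨fun x z => sum_nonneg fun y _ => mul_nonneg (hk.1 x y) (hκ.1 y z), fun x => ?_⟩
  rw [sum_comm]; simp only [← mul_sum, hκ.2, mul_one, hk.2 x]

theorem comp_tauStar [DecidableEq Y] (κ : X → Y → ℝ) :
    (fun x y => ∑ z, κ x z * tauStar z y) = κ := by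
  funext x y; simp [tauStar]

end Kernel

section Payoff

variable {Ω M A : Type*} [Fintype Ω] [Fintype M] [Fintype A]

theorem expPayoff_mixExp (p : Ω → ℝ) (u : A → Ω → ℝ) (t : ℝ) (σ σ' : Ω → M → ℝ)
    (τ : M → A → ℝ) :
    expPayoff p u (mixExp t σ σ') τ = t * expPayoff p u σ τ + (1 - t) * expPayoff p u σ' τ := by
  simp only [expPayoff, mixExp, mul_sum, ← sum_add_distrib]
  congr! 3; ring

theorem expPayoff_mixExp_right (p : Ω → ℝ) (u : A → Ω → ℝ) (t : ℝ) (σ : Ω → M → ℝ)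
    (τ τ' : M → A → ℝ) :
    expPayoff p u σ (mixExp t τ τ') = t * expPayoff p u σ τ + (1 - t) * expPayoff p u σ τ' := by
  simp only [expPayoff, mixExp, mul_sum, ← sum_add_distrib]
  congr! 3; ring

theorem expPayoff_sum_mul {ι : Type*} [Fintype ι] (p : Ω → ℝ) (u : A → Ω → ℝ) (w : ι → ℝ)
    (σ : ι → Ω → M → ℝ) (τ : M → A → ℝ) :
    expPayoff p u (fun ω m => ∑ i, w i * σ i ω m) τ = ∑ i, w i * expPayoff p u (σ i) τ := by
  simp only [expPayoff, mul_sum, sum_mul]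
  rw [sum_comm (γ := ι)]; refine sum_congr rfl fun ω _ => ?_
  rw [sum_comm (γ := ι)]; refine sum_congr rfl fun m _ => ?_
  rw [sum_comm (γ := ι)]; refine sum_congr rfl fun a _ => sum_congr rfl fun i _ => ?_
  ring

theorem expPayoff_comp {N : Type*} [Fintype N] (p : Ω → ℝ) (u : A → Ω → ℝ) (σ : Ω → M → ℝ)
    (κ : M → N → ℝ) (τ : N → A → ℝ) :
    expPayoff p u (fun ω n => ∑ m, σ ω m * κ m n) τ
      = expPayoff p u σ (fun m a => ∑ n, κ m n * τ n a) := by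
  simp only [expPayoff, mul_sum, sum_mul]
  refine sum_congr rfl fun ω _ => ?_
  rw [sum_comm (γ := M) (β := ℝ), sum_comm (γ := N) (β := ℝ)]
  refine sum_congr rfl fun a _ => ?_
  rw [sum_comm (γ := N) (β := ℝ)]
  refine sum_congr rfl fun m _ => sum_congr rfl fun n _ => ?_
  ring

theorem expPayoff_eq_sum_strategy_mul (p : Ω → ℝ) (u : A → Ω → ℝ) (σ : Ω → M → ℝ)
    (τ : M → A → ℝ) :
    expPayoff p u σ τ = ∑ m, ∑ a, τ m a * ∑ ω, p ω * σ ω m * u a ω := by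
  simp only [expPayoff, mul_sum]
  rw [sum_comm]; refine sum_congr rfl fun m _ => ?_
  rw [sum_comm]; refine sum_congr rfl fun a _ => sum_congr rfl fun ω _ => ?_
  ring

variable [DecidableEq A]

theorem expPayoff_detKernel_const_right {σ : Ω → M → ℝ} (hσ : IsKernel σ) (p : Ω → ℝ)
    (u : A → Ω → ℝ) (a : A) :
    expPayoff p u σ (detKernel fun _ : M => a) = ∑ ω, p ω * u a ω := by
  simp only [expPayoff, detKernel, mul_ite, mul_one, mul_zero, ite_mul, zero_mul, sum_ite_eq',
    mem_univ, if_true]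
  refine sum_congr rfl fun ω _ => ?_
  rw [← sum_mul, ← mul_sum, hσ.2 ω, mul_one]

theorem expPayoff_detKernel_const_left (p : Ω → ℝ) (u : A → Ω → ℝ) (m : A) (τ : A → A → ℝ) :
    expPayoff p u (detKernel fun _ : Ω => m) τ = ∑ a, τ m a * ∑ ω, p ω * u a ω := by
  simp [expPayoff_eq_sum_strategy_mul, detKernel]

end Payoff

section Obedience

variable {Ω A : Type*} [Fintype Ω] [Fintype A] [DecidableEq A] {p : Ω → ℝ} {ur : A → Ω → ℝ}

theorem obedient_of_isEmpty [IsEmpty A] (σ : Ω → A → ℝ) : Obedient p ur σ :=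
  fun _ _ => by simp [expPayoff]

theorem not_obedient_iff {σ : Ω → A → ℝ} :
    ¬ Obedient p ur σ ↔ ∃ τ, IsKernel τ ∧ expPayoff p ur σ tauStar < expPayoff p ur σ τ := by
  simp [Obedient]

theorem Obedient.mix {σ σ' : Ω → A → ℝ} {t : ℝ} (ho : Obedient p ur σ)
    (ho' : Obedient p ur σ') (ht : t ∈ Set.Icc 0 1) : Obedient p ur (mixExp t σ σ') := by
  intro τ hτ
  rw [expPayoff_mixExp, expPayoff_mixExp]
  exact add_le_add (mul_le_mul_of_nonneg_left (ho τ hτ) ht.1)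
    (mul_le_mul_of_nonneg_left (ho' τ hτ) (sub_nonneg.2 ht.2))

theorem Obedient.sum_prior_le {σ : Ω → A → ℝ} (hσ : IsKernel σ) (ho : Obedient p ur σ) (a : A) :
    ∑ ω, p ω * ur a ω ≤ expPayoff p ur σ tauStar := by
  simpa only [expPayoff_detKernel_const_right hσ] using ho _ (isKernel_detKernel fun _ => a)

theorem obedient_detKernel_const {a : A} (ha : ∀ b, ∑ ω, p ω * ur b ω ≤ ∑ ω, p ω * ur a ω) :
    Obedient p ur (detKernel fun _ : Ω => a) := by
  intro τ hτ
  rw [expPayoff_detKernel_const_left, expPayoff_detKernel_const_left]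
  calc ∑ b, τ a b * ∑ ω, p ω * ur b ω ≤ ∑ b, τ a b * ∑ ω, p ω * ur a ω :=
        sum_le_sum fun b _ => mul_le_mul_of_nonneg_left (ha b) (hτ.1 a b)
    _ = ∑ b, tauStar a b * ∑ ω, p ω * ur b ω := by simp [← sum_mul, hτ.2 a, tauStar]

theorem exists_isBestReply [Nonempty A] (p : Ω → ℝ) (ur : A → Ω → ℝ) (σ : Ω → A → ℝ) :
    ∃ τ, IsKernel τ ∧ IsBestReply p ur σ τ := by
  set v : A → A → ℝ := fun m a => ∑ ω, p ω * σ ω m * ur a ω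
  have hmax : ∀ m, ∃ b, ∀ a, v m a ≤ v m b := fun m =>
    let ⟨b, _, hb⟩ := exists_max_image univ (v m) univ_nonempty
    ⟨b, fun a => hb a (mem_univ a)⟩
  choose f hf using hmax
  refine ⟨detKernel f, isKernel_detKernel f, fun τ hτ => ?_⟩
  rw [expPayoff_eq_sum_strategy_mul, expPayoff_eq_sum_strategy_mul]
  refine sum_le_sum fun m _ => ?_
  calc ∑ a, τ m a * v m a ≤ ∑ a, τ m a * v m (f m) :=
        sum_le_sum fun a _ => mul_le_mul_of_nonneg_left (hf m a) (hτ.1 m a)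
    _ = ∑ a, detKernel f m a * v m a := by simp [← sum_mul, hτ.2 m, detKernel]

theorem IsBestReply.obedient_comp {σ : Ω → A → ℝ} {τ : A → A → ℝ} (hτ : IsKernel τ)
    (hbest : IsBestReply p ur σ τ) : Obedient p ur fun ω a => ∑ m, σ ω m * τ m a := by
  intro τ' hτ'
  rw [expPayoff_comp, expPayoff_comp, comp_tauStar]
  exact hbest _ (hτ.comp hτ')

end Obedience

theorem SmoothIndex.deriv_pos {φ : ℝ → ℝ} (hφ : SmoothIndex φ) (x : ℝ) : 0 < deriv φ x := by
  have hslope := hφ.2.1.slope_le_deriv (Set.mem_univ x) (Set.mem_univ (x + 1)) (lt_add_one x)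
    (hφ.2.2 x)
  rw [slope_def_field, add_sub_cancel_left, div_one] at hslope
  linarith [hφ.1 (lt_add_one x)]

theorem ConcaveOn.sum_mul_le_of_isProb {ι : Type*} [Fintype ι] {φ : ℝ → ℝ}
    (hφ : ConcaveOn ℝ Set.univ φ) {μ : ι → ℝ} (hμ : IsProb μ) (x : ι → ℝ) :
    ∑ i, μ i * φ (x i) ≤ φ (∑ i, μ i * x i) := by
  simpa only [smul_eq_mul] using
    hφ.le_map_sum (fun i _ => hμ.1 i) hμ.2 fun i _ => Set.mem_univ (x i)

theorem HasDerivAt.nonpos_of_forall_Ioo_le {f : ℝ → ℝ} {f' : ℝ} (hf : HasDerivAt f f' 0)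
    (h : ∀ t ∈ Set.Ioo (0 : ℝ) 1, f t ≤ f 0) : f' ≤ 0 := by
  refine le_of_tendsto hf.tendsto_slope_zero_right ?_
  filter_upwards [Ioo_mem_nhdsGT one_pos] with t ht
  rw [zero_add, smul_eq_mul]
  exact mul_nonpos_of_nonneg_of_nonpos (inv_nonneg.2 ht.1.le) (sub_nonpos.2 (h t ht))

theorem eventually_lt_mix {c x y : ℝ} (h : c < y) :
    ∀ᶠ t in 𝓝[>] (0 : ℝ), c < t * x + (1 - t) * y := by
  have hcont : Continuous fun t : ℝ => t * x + (1 - t) * y := by fun_prop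
  refine nhdsWithin_le_nhds ((hcont.tendsto 0).eventually_const_lt ?_)
  simpa using h

section Ambiguity

variable {Ω A Θ : Type*} [Fintype Ω] [Fintype A] [DecidableEq A] [Fintype Θ]
  {φr : ℝ → ℝ} {p : Ω → ℝ} {ur : A → Ω → ℝ} {σ : Θ → Ω → A → ℝ} {μ : Θ → ℝ}

theorem AmbObedient.obedient_of_affine (hobed : AmbObedient φr p ur σ μ) (hφ : StrictMono φr)
    {α β : ℝ} (haff : ∀ x, φr x = α * x + β) :
    Obedient p ur fun ω a => ∑ θ, μ θ * σ θ ω a := by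
  have hα : 0 < α := by
    have := hφ zero_lt_one
    rw [haff, haff] at this
    linarith
  intro τ hτ
  have h := hobed τ hτ
  simp only [haff, mul_add, sum_add_distrib, mul_left_comm (μ _) α, ← mul_sum] at h
  rw [expPayoff_sum_mul, expPayoff_sum_mul]
  exact le_of_mul_le_mul_left (by linarith) hα

theorem AmbObedient.sum_prior_le (hobed : AmbObedient φr p ur σ μ) (hmono : StrictMono φr)
    (hconc : ConcaveOn ℝ Set.univ φr) (hσ : ∀ θ, IsKernel (σ θ)) (hμ : IsProb μ) (a : A) :
    ∑ ω, p ω * ur a ω ≤ expPayoff p ur (fun ω a => ∑ θ, μ θ * σ θ ω a) tauStar := by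
  have h := hobed _ (isKernel_detKernel fun _ => a)
  simp only [expPayoff_detKernel_const_right (hσ _), ← sum_mul, hμ.2, one_mul] at h
  rw [expPayoff_sum_mul, ← hmono.le_iff_le]
  exact h.trans (hconc.sum_mul_le_of_isProb hμ _)

/-- First-order condition of ambiguous obedience at `τ*` in the direction of `τ`. -/
theorem AmbObedient.sum_mul_deriv_mul_sub_nonpos (hobed : AmbObedient φr p ur σ μ)
    (hφ : Differentiable ℝ φr) {τ : A → A → ℝ} (hτ : IsKernel τ) :
    ∑ θ, μ θ * (deriv φr (expPayoff p ur (σ θ) tauStar) *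
      (expPayoff p ur (σ θ) τ - expPayoff p ur (σ θ) tauStar)) ≤ 0 := by
  set x := fun θ => expPayoff p ur (σ θ) tauStar
  set y := fun θ => expPayoff p ur (σ θ) τ
  have hderiv : HasDerivAt (fun t => ∑ θ, μ θ * φr (x θ + t * (y θ - x θ)))
      (∑ θ, μ θ * (deriv φr (x θ) * (y θ - x θ))) 0 := by
    refine HasDerivAt.fun_sum fun θ _ => HasDerivAt.const_mul _ ?_
    have hline := ((hasDerivAt_id (0 : ℝ)).mul_const (y θ - x θ)).const_add (x θ)
    simp only [id, one_mul] at hline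
    exact (hφ _).hasDerivAt.comp_of_eq 0 hline (by simp)
  refine hderiv.nonpos_of_forall_Ioo_le fun t ht => ?_
  have h := hobed _ (hτ.mix isKernel_tauStar ⟨ht.1.le, ht.2.le⟩)
  simp only [expPayoff_mixExp_right] at h
  convert h using 4 <;> (simp only [x, y]; ring)

theorem AmbObedient.exists_obedient_superset (hobed : AmbObedient φr p ur σ μ)
    (hφ : SmoothIndex φr) (hσ : ∀ θ, IsKernel (σ θ)) (hμ : IsProb μ) :
    ∃ G : Ω → A → ℝ, IsKernel G ∧ Obedient p ur G ∧
      ∀ ω a, 0 < ∑ θ, μ θ * σ θ ω a → 0 < G ω a := by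
  set d := fun θ => deriv φr (expPayoff p ur (σ θ) tauStar)
  have hd : ∀ θ, 0 < d θ := fun θ => hφ.deriv_pos _
  set Z := ∑ θ, μ θ * d θ
  have hZ : 0 < Z := by
    obtain ⟨θ, -, hθ⟩ := (sum_pos_iff_of_nonneg fun θ _ => hμ.1 θ).1 (hμ.2 ▸ one_pos)
    exact sum_pos' (fun θ _ => mul_nonneg (hμ.1 θ) (hd θ).le) ⟨θ, mem_univ θ, mul_pos hθ (hd θ)⟩
  set w := fun θ => μ θ * (d θ / Z)
  have hw : IsProb w := by
    refine ⟨fun θ => mul_nonneg (hμ.1 θ) (div_pos (hd θ) hZ).le, ?_⟩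
    simp only [w, mul_div_assoc', ← sum_div]
    exact div_self hZ.ne'
  refine ⟨fun ω a => ∑ θ, w θ * σ θ ω a, IsKernel.sum_mul hw hσ, fun τ hτ => ?_, fun ω a h => ?_⟩
  · rw [expPayoff_sum_mul, expPayoff_sum_mul, ← sub_nonpos, ← sum_sub_distrib]
    have hfoc := hobed.sum_mul_deriv_mul_sub_nonpos hφ.2.2 hτ
    calc ∑ θ, (w θ * expPayoff p ur (σ θ) τ - w θ * expPayoff p ur (σ θ) tauStar)
        = Z⁻¹ * ∑ θ, μ θ * (d θ * (expPayoff p ur (σ θ) τ - expPayoff p ur (σ θ) tauStar)) := by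
          rw [mul_sum]; refine sum_congr rfl fun θ _ => ?_
          simp only [w]; field_simp
      _ ≤ 0 := mul_nonpos_of_nonneg_of_nonpos (inv_nonneg.2 hZ.le) hfoc
  · obtain ⟨θ, -, hθ⟩ :=
      (sum_pos_iff_of_nonneg fun θ _ => mul_nonneg (hμ.1 θ) ((hσ θ).1 ω a)).1 h
    have hμθ : 0 < μ θ := pos_of_mul_pos_left hθ ((hσ θ).1 ω a)
    refine sum_pos' (fun θ _ => mul_nonneg (hw.1 θ) ((hσ θ).1 ω a)) ⟨θ, mem_univ θ, ?_⟩
    exact mul_pos (mul_pos hμθ (div_pos (hd θ) hZ)) (pos_of_mul_pos_right hθ hμθ.le)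

end Ambiguity

section Perturbation

variable {Ω A : Type*} [Fintype Ω] [Fintype A] [DecidableEq A] {p : Ω → ℝ} {ur : A → Ω → ℝ}

theorem exists_obedient_superset_of_not_obedient {σ G : Ω → A → ℝ} (hσ : IsKernel σ)
    (hσob : ¬ Obedient p ur σ) (hprior : ∀ a, ∑ ω, p ω * ur a ω ≤ expPayoff p ur σ tauStar)
    (hG : IsKernel G) (hGob : Obedient p ur G) (hGσ : ∀ ω a, 0 < σ ω a → 0 < G ω a) :
    ∃ K σ₀ : Ω → A → ℝ, IsKernel K ∧ Obedient p ur K ∧ IsKernel σ₀ ∧ Obedient p ur σ₀ ∧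
      expPayoff p ur σ₀ tauStar ≤ expPayoff p ur σ tauStar ∧
      expPayoff p ur σ₀ tauStar < expPayoff p ur K tauStar ∧
      (∀ ω a, 0 < σ ω a → 0 < K ω a) ∧ ∀ ω a, 0 < σ₀ ω a → 0 < K ω a := by
  have : Nonempty A := not_isEmpty_iff.1 fun _ => hσob (obedient_of_isEmpty σ)
  obtain ⟨τ₀, hτ₀, hgain⟩ := not_obedient_iff.1 hσob
  obtain ⟨a, -, ha⟩ := exists_max_image univ (fun a => ∑ ω, p ω * ur a ω) univ_nonempty
  obtain ⟨τ, hτ, hbest⟩ := exists_isBestReply p ur σ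
  set σ₀ : Ω → A → ℝ := detKernel fun _ => a
  set σhat : Ω → A → ℝ := fun ω b => ∑ m, σ ω m * τ m b
  have hσ₀ : IsKernel σ₀ := isKernel_detKernel _
  have hσhat : IsKernel σhat := hσ.comp hτ
  have hσ₀ob : Obedient p ur σ₀ := obedient_detKernel_const fun b => ha b (mem_univ b)
  have hhalf : (1 / 2 : ℝ) ∈ Set.Ioo 0 1 := by norm_num
  have hhalf' := Set.Ioo_subset_Icc_self hhalf
  have hR₀ : expPayoff p ur σ₀ tauStar = ∑ ω, p ω * ur a ω := by
    simp [σ₀, expPayoff_detKernel_const_left, tauStar]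
  have hRhat : expPayoff p ur σ tauStar < expPayoff p ur σhat tauStar := by
    rw [expPayoff_comp, comp_tauStar]
    exact hgain.trans_le (hbest τ₀ hτ₀)
  have hmix := hG.mix hσ₀ hhalf'
  refine ⟨mixExp (1 / 2) σhat (mixExp (1 / 2) G σ₀), σ₀, hσhat.mix hmix hhalf',
    (hbest.obedient_comp hτ).mix (hGob.mix hσ₀ob hhalf') hhalf', hσ₀, hσ₀ob, ?_, ?_,
    fun ω b h => ?_, fun ω b h => ?_⟩
  · exact hR₀ ▸ hprior a
  · rw [expPayoff_mixExp, expPayoff_mixExp, hR₀]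
    linarith [hprior a, hGob.sum_prior_le hG a]
  · exact (hσhat.mix_pos_iff hmix hhalf ω b).2
      (Or.inr ((hG.mix_pos_iff hσ₀ hhalf ω b).2 (Or.inl (hGσ ω b h))))
  · exact (hσhat.mix_pos_iff hmix hhalf ω b).2
      (Or.inr ((hG.mix_pos_iff hσ₀ hhalf ω b).2 (Or.inr h)))

theorem exists_paretoRanked_of_obedient_superset {us : A → Ω → ℝ} {usBP : ℝ}
    {σ K σ₀ : Ω → A → ℝ}
    (hBP : ∀ ρ, IsKernel ρ → Obedient p ur ρ → expPayoff p us ρ tauStar ≤ usBP)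
    (hσ : IsKernel σ) (hσob : ¬ Obedient p ur σ) (hσs : usBP < expPayoff p us σ tauStar)
    (hK : IsKernel K) (hKob : Obedient p ur K) (hσ₀ : IsKernel σ₀) (hσ₀ob : Obedient p ur σ₀)
    (hσ₀σ : expPayoff p ur σ₀ tauStar ≤ expPayoff p ur σ tauStar)
    (hσ₀K : expPayoff p ur σ₀ tauStar < expPayoff p ur K tauStar)
    (hKσ : ∀ ω a, 0 < σ ω a → 0 < K ω a) (hKσ₀ : ∀ ω a, 0 < σ₀ ω a → 0 < K ω a) :
    ∃ σ1 σ2 : Ω → A → ℝ, IsKernel σ1 ∧ IsKernel σ2 ∧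
      ParetoRanked p us ur σ1 σ2 ∧
      (∀ ω, {a | 0 < σ1 ω a} = {a | 0 < σ2 ω a}) ∧
      usBP < expPayoff p us σ1 tauStar ∧
      Obedient p ur σ2 ∧ ¬ Obedient p ur σ1 := by
  obtain ⟨τ, hτ, hgain⟩ := not_obedient_iff.1 hσob
  obtain ⟨δ, ⟨hδs, hδr⟩, hδ⟩ :=
    (((eventually_lt_mix (x := expPayoff p us K tauStar) hσs).and
      (eventually_lt_mix (x := expPayoff p ur K τ - expPayoff p ur K tauStar)
        (sub_pos.2 hgain))).and (Ioo_mem_nhdsGT one_pos)).exists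
  have hδ2 : δ / 2 ∈ Set.Ioo (0 : ℝ) 1 := ⟨by linarith [hδ.1], by linarith [hδ.2]⟩
  have hσ2ob : Obedient p ur (mixExp (δ / 2) K σ₀) :=
    hKob.mix hσ₀ob (Set.Ioo_subset_Icc_self hδ2)
  have hσ2 : IsKernel (mixExp (δ / 2) K σ₀) := hK.mix hσ₀ (Set.Ioo_subset_Icc_self hδ2)
  have hσ1s : usBP < expPayoff p us (mixExp δ K σ) tauStar := by rwa [expPayoff_mixExp]
  refine ⟨mixExp δ K σ, mixExp (δ / 2) K σ₀, hK.mix hσ (Set.Ioo_subset_Icc_self hδ), hσ2,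
    Or.inl ⟨(hBP _ hσ2 hσ2ob).trans_lt hσ1s, ?_⟩, fun ω => ?_, hσ1s, hσ2ob, fun h => ?_⟩
  · rw [expPayoff_mixExp, expPayoff_mixExp]
    nlinarith [hδ.1, hδ.2]
  · ext a
    change 0 < mixExp δ K σ ω a ↔ 0 < mixExp (δ / 2) K σ₀ ω a
    rw [hK.mix_pos_iff hσ hδ, hK.mix_pos_iff hσ₀ hδ2]
    exact ⟨fun h => Or.inl (h.elim id (hKσ ω a)), fun h => Or.inl (h.elim id (hKσ₀ ω a))⟩
  · have := h τ hτ
    rw [expPayoff_mixExp, expPayoff_mixExp] at this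
    linarith

end Perturbation

theorem equivalent_necessary_conditions_general
    {Ω A Θ : Type*} [Fintype Ω] [Fintype A] [DecidableEq A] [Fintype Θ]
    (p : Ω → ℝ) (us ur : A → Ω → ℝ)
    (φs φr : ℝ → ℝ) (hφs : SmoothIndex φs) (hφr : SmoothIndex φr)
    (usBP : ℝ)
    (husBP : IsGreatest {x : ℝ | ∃ σ0 : Ω → A → ℝ,
      IsKernel σ0 ∧ Obedient p ur σ0 ∧ x = expPayoff p us σ0 tauStar} usBP)
    (σ : Θ → Ω → A → ℝ) (hσ : ∀ θ, IsKernel (σ θ)) (μ : Θ → ℝ) (hμ : IsProb μ)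
    (hobed : AmbObedient φr p ur σ μ)
    (hben : φs usBP < ∑ θ, μ θ * φs (expPayoff p us (σ θ) tauStar)) :
    (¬ ∃ α β : ℝ, ∀ x, φr x = α * x + β) ∧
    ∃ σ1 σ2 : Ω → A → ℝ, IsKernel σ1 ∧ IsKernel σ2 ∧
      ParetoRanked p us ur σ1 σ2 ∧
      (∀ ω, {a | 0 < σ1 ω a} = {a | 0 < σ2 ω a}) ∧
      usBP < expPayoff p us σ1 tauStar ∧
      Obedient p ur σ2 ∧ ¬ Obedient p ur σ1 := by
  set σbar : Ω → A → ℝ := fun ω a => ∑ θ, μ θ * σ θ ω a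
  have hbar : IsKernel σbar := IsKernel.sum_mul hμ hσ
  have hBP : ∀ ρ, IsKernel ρ → Obedient p ur ρ → expPayoff p us ρ tauStar ≤ usBP :=
    fun ρ hρ hρob => husBP.2 ⟨ρ, hρ, hρob, rfl⟩
  have hbar_s : usBP < expPayoff p us σbar tauStar := by
    rw [expPayoff_sum_mul, ← hφs.1.lt_iff_lt]
    exact hben.trans_le (hφs.2.1.sum_mul_le_of_isProb hμ _)
  have hbar_ob : ¬ Obedient p ur σbar := fun h => (hBP σbar hbar h).not_gt hbar_s
  refine ⟨fun ⟨α, β, hαβ⟩ => hbar_ob (hobed.obedient_of_affine hφr.1 hαβ), ?_⟩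
  obtain ⟨G, hG, hGob, hGσ⟩ := hobed.exists_obedient_superset hφr hσ hμ
  obtain ⟨K, σ₀, hK, hKob, hσ₀, hσ₀ob, hσ₀σ, hσ₀K, hKσ, hKσ₀⟩ :=
    exists_obedient_superset_of_not_obedient hbar hbar_ob (hobed.sum_prior_le hφr.1 hφr.2.1 hσ hμ)
      hG hGob hGσ
  exact exists_paretoRanked_of_obedient_superset hBP hbar hbar_ob hbar_s hK hKob hσ₀ hσ₀ob
    hσ₀σ hσ₀K hKσ hKσ₀

/-- Lemma A.5, equivalent necessary conditions: if some obedient ambiguous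
experiment benefits the sender, then `φr` is not affine and there exist Pareto-ranked
experiments `σ1` and `σ2` such that (i) for each `ω` the supports of `σ1(·|ω)` and
`σ2(·|ω)` coincide, (ii) `u_s(σ1, τ*) > u_s^BP`, and (iii) `σ2` is obedient while `σ1`
is not obedient. -/
theorem equivalent_necessary_conditions
    {Ω A Θ : Type*} [Fintype Ω] [Fintype A] [DecidableEq A] [Fintype Θ]
    (p : Ω → ℝ) (hp : IsProb p) (us ur : A → Ω → ℝ)
    (φs φr : ℝ → ℝ) (hφs : SmoothIndex φs) (hφr : SmoothIndex φr)
    (usBP : ℝ)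
    (husBP : IsGreatest {x : ℝ | ∃ σ0 : Ω → A → ℝ,
      IsKernel σ0 ∧ Obedient p ur σ0 ∧ x = expPayoff p us σ0 tauStar} usBP)
    (σ : Θ → Ω → A → ℝ) (hσ : ∀ θ, IsKernel (σ θ)) (μ : Θ → ℝ) (hμ : IsProb μ)
    (hobed : AmbObedient φr p ur σ μ)
    (hben : φs usBP < ∑ θ, μ θ * φs (expPayoff p us (σ θ) tauStar)) :
    (¬ ∃ α β : ℝ, ∀ x, φr x = α * x + β) ∧
    ∃ σ1 σ2 : Ω → A → ℝ, IsKernel σ1 ∧ IsKernel σ2 ∧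
      ParetoRanked p us ur σ1 σ2 ∧
      (∀ ω, {a | 0 < σ1 ω a} = {a | 0 < σ2 ω a}) ∧
      usBP < expPayoff p us σ1 tauStar ∧
      Obedient p ur σ2 ∧ ¬ Obedient p ur σ1 :=
  equivalent_necessary_conditions_general p us ur φs φr hφs hφr usBP husBP σ hσ μ hμ hobed hben
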